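/- Let ψ : ℝ^M → ℂ^D be a differentiable family of unit vectors, fix θ* ∈ ℝ^M, let 0 < t ≤ 1, and set K = (t − 1)·ψ(θ*)ψ(θ*)† + I, F = K†K, p(θ) = ⟨ψ(θ), F ψ(θ)⟩, ψ^{ps}(θ) = K ψ(θ)/√(p(θ)). Define the Uhlmann curvature of a unit-vector family φ by 𝓙_{ij}(θ | φ) = 4 Im[⟨∂_iφ(θ), ∂_jφ(θ)⟩ − ⟨∂_iφ(θ), φ(θ)⟩⟨φ(θ), ∂_jφ(θ)⟩]. Then for all i, j: 𝓙_{ij}(θ* | ψ^{ps}) = (1/t²) · 𝓙_{ij}(θ* | ψ). -/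

import Mathlib

/-!
At `θ*` the filter `K` maps `u = ψ(θ*)` to `t u`, so `p(θ*) = t²` and `ψ^{ps}(θ*) = u`. Every vector
`K x` differs from `x` by a multiple of `u`, and so does the normalization factor's contribution to
the derivative; hence `∂_k ψ^{ps}(θ*) = t⁻¹ ∂_k ψ(θ*) + a_k u` for some `a_k ∈ ℂ`. The form
`Q_u(X, Y) = ⟨X, Y⟩ − ⟨X, u⟩⟨u, Y⟩`, whose imaginary part gives the Uhlmann curvature, is blind to
multiples of the unit vector `u` in either argument, so only the factor `t⁻¹ · t⁻¹` survives.
-/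

noncomputable section

open Matrix

/-- Standard Hermitian inner product on `ℂ^D`, conjugate-linear in the first argument. -/
def dotc {D : ℕ} (x y : Fin D → ℂ) : ℂ := ∑ d, starRingEnd ℂ (x d) * y d

/-- Partial derivative of a parametrized family with respect to the `i`-th parameter. -/
def pder {M D : ℕ} (i : Fin M) (φ : (Fin M → ℝ) → (Fin D → ℂ)) (θ : Fin M → ℝ) :
    Fin D → ℂ :=
  fderiv ℝ φ θ (Pi.single i 1)

/-- Mean Uhlmann curvature entry
`𝓙_{ij}(θ|φ) = 4 Im[⟨∂_iφ,∂_jφ⟩ − ⟨∂_iφ,φ⟩⟨φ,∂_jφ⟩]`. -/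
def uhlmann {M D : ℕ} (φ : (Fin M → ℝ) → (Fin D → ℂ)) (θ : Fin M → ℝ) (i j : Fin M) : ℝ :=
  4 * (dotc (pder i φ θ) (pder j φ θ) -
        dotc (pder i φ θ) (φ θ) * dotc (φ θ) (pder j φ θ)).im

section InnerProduct

variable {D : ℕ}

lemma dotc_eq_star_dotProduct (x y : Fin D → ℂ) : dotc x y = star x ⬝ᵥ y := rfl

lemma dotc_add_left (x y z : Fin D → ℂ) : dotc (x + y) z = dotc x z + dotc y z := by
  simp only [dotc_eq_star_dotProduct, star_add, add_dotProduct]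

lemma dotc_add_right (x y z : Fin D → ℂ) : dotc x (y + z) = dotc x y + dotc x z := by
  simp only [dotc_eq_star_dotProduct, dotProduct_add]

lemma dotc_smul_left (c : ℂ) (x y : Fin D → ℂ) :
    dotc (c • x) y = starRingEnd ℂ c * dotc x y := by
  simp only [dotc_eq_star_dotProduct, star_smul, smul_dotProduct, smul_eq_mul]
  rfl

lemma dotc_smul_right (c : ℂ) (x y : Fin D → ℂ) : dotc x (c • y) = c * dotc x y := by
  simp only [dotc_eq_star_dotProduct, dotProduct_smul, smul_eq_mul]

lemma dotc_mulVec_conjTranspose (A : Matrix (Fin D) (Fin D) ℂ) (x y : Fin D → ℂ) :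
    dotc x (Aᴴ *ᵥ y) = dotc (A *ᵥ x) y := by
  simp only [dotc_eq_star_dotProduct, dotProduct_mulVec, star_mulVec]

lemma dotc_conjTranspose_mul_mulVec (A : Matrix (Fin D) (Fin D) ℂ) (x y : Fin D → ℂ) :
    dotc x ((Aᴴ * A) *ᵥ y) = dotc (A *ᵥ x) (A *ᵥ y) := by
  rw [← mulVec_mulVec, dotc_mulVec_conjTranspose]

lemma rankOneUpdate_mulVec (c : ℂ) (u x : Fin D → ℂ) :
    (c • vecMulVec u (star u) + 1) *ᵥ x = x + (c * dotc u x) • u := by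
  rw [add_mulVec, one_mulVec, smul_mulVec, vecMulVec_mulVec, add_comm, op_smul_eq_smul, smul_smul]
  rfl

lemma rankOneUpdate_mulVec_self {u : Fin D → ℂ} (hu : dotc u u = 1) (c : ℂ) :
    (c • vecMulVec u (star u) + 1) *ᵥ u = (c + 1) • u := by
  rw [rankOneUpdate_mulVec, hu, mul_one, add_smul, one_smul, add_comm]

end InnerProduct

section GeometricTensor

variable {D : ℕ}

/-- The quantum geometric tensor at the state `u`, as a sesquilinear form on tangent vectors. -/
def qgtForm (u x y : Fin D → ℂ) : ℂ := dotc x y - dotc x u * dotc u y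

lemma qgtForm_add_smul_left {u : Fin D → ℂ} (hu : dotc u u = 1) (a : ℂ) (x y : Fin D → ℂ) :
    qgtForm u (x + a • u) y = qgtForm u x y := by
  simp only [qgtForm, dotc_add_left, dotc_smul_left, hu]
  ring

lemma qgtForm_add_smul_right {u : Fin D → ℂ} (hu : dotc u u = 1) (a : ℂ) (x y : Fin D → ℂ) :
    qgtForm u x (y + a • u) = qgtForm u x y := by
  simp only [qgtForm, dotc_add_right, dotc_smul_right, hu]
  ring

lemma qgtForm_smul_left (u : Fin D → ℂ) (c : ℂ) (x y : Fin D → ℂ) :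
    qgtForm u (c • x) y = starRingEnd ℂ c * qgtForm u x y := by
  simp only [qgtForm, dotc_smul_left]
  ring

lemma qgtForm_smul_right (u : Fin D → ℂ) (c : ℂ) (x y : Fin D → ℂ) :
    qgtForm u x (c • y) = c * qgtForm u x y := by
  simp only [qgtForm, dotc_smul_right]
  ring

lemma uhlmann_eq_im_qgtForm {M : ℕ} (φ : (Fin M → ℝ) → (Fin D → ℂ)) (θ : Fin M → ℝ)
    (i j : Fin M) : uhlmann φ θ i j = 4 * (qgtForm (φ θ) (pder i φ θ) (pder j φ θ)).im := rfl

lemma uhlmann_eq_of_pder_eq_smul_add {M : ℕ} {φ φ' : (Fin M → ℝ) → (Fin D → ℂ)}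
    {θ : Fin M → ℝ} (hunit : dotc (φ θ) (φ θ) = 1) (hφ' : φ' θ = φ θ) (r : ℝ)
    (hpder : ∀ k, ∃ a : ℂ, pder k φ' θ = (r : ℂ) • pder k φ θ + a • φ θ) (i j : Fin M) :
    uhlmann φ' θ i j = r ^ 2 * uhlmann φ θ i j := by
  obtain ⟨a, ha⟩ := hpder i
  obtain ⟨b, hb⟩ := hpder j
  rw [uhlmann_eq_im_qgtForm, uhlmann_eq_im_qgtForm, hφ', ha, hb, qgtForm_add_smul_left hunit,
    qgtForm_add_smul_right hunit, qgtForm_smul_left, qgtForm_smul_right, ← mul_assoc,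
    Complex.conj_ofReal, ← Complex.ofReal_mul, Complex.im_ofReal_mul]
  ring

end GeometricTensor

section Derivatives

variable {M D : ℕ} {φ χ : (Fin M → ℝ) → (Fin D → ℂ)} {θ : Fin M → ℝ}

lemma DifferentiableAt.dotc (hφ : DifferentiableAt ℝ φ θ) (hχ : DifferentiableAt ℝ χ θ) :
    DifferentiableAt ℝ (fun θ => _root_.dotc (φ θ) (χ θ)) θ := by
  simp only [dotc_eq_star_dotProduct, dotProduct]
  fun_prop

lemma HasFDerivAt.mulVec (A : Matrix (Fin D) (Fin D) ℂ) {φ' : (Fin M → ℝ) →L[ℝ] (Fin D → ℂ)}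
    (hφ : HasFDerivAt φ φ' θ) :
    HasFDerivAt (fun θ => A *ᵥ φ θ)
      ((LinearMap.toContinuousLinearMap (A.mulVecLin.restrictScalars ℝ)).comp φ') θ :=
  (LinearMap.toContinuousLinearMap (A.mulVecLin.restrictScalars ℝ)).hasFDerivAt.comp θ hφ

lemma DifferentiableAt.mulVec (A : Matrix (Fin D) (Fin D) ℂ) (hφ : DifferentiableAt ℝ φ θ) :
    DifferentiableAt ℝ (fun θ => A *ᵥ φ θ) θ :=
  (hφ.hasFDerivAt.mulVec A).differentiableAt

lemma pder_mulVec (A : Matrix (Fin D) (Fin D) ℂ) (hφ : DifferentiableAt ℝ φ θ) (i : Fin M) :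
    pder i (fun θ => A *ᵥ φ θ) θ = A *ᵥ pder i φ θ := by
  rw [pder, (hφ.hasFDerivAt.mulVec A).fderiv]
  rfl

lemma pder_smul {f : (Fin M → ℝ) → ℝ} (hf : DifferentiableAt ℝ f θ)
    (hφ : DifferentiableAt ℝ φ θ) (i : Fin M) :
    pder i (fun θ => f θ • φ θ) θ = f θ • pder i φ θ + fderiv ℝ f θ (Pi.single i 1) • φ θ := by
  rw [pder, fderiv_fun_smul hf hφ]
  rfl

end Derivatives

def normalized {M D : ℕ} (χ : (Fin M → ℝ) → (Fin D → ℂ)) (θ : Fin M → ℝ) : Fin D → ℂ :=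
  (√(dotc (χ θ) (χ θ)).re)⁻¹ • χ θ

section Normalization

variable {M D : ℕ} {χ : (Fin M → ℝ) → (Fin D → ℂ)} {θ : Fin M → ℝ} {u : Fin D → ℂ} {t : ℝ}

lemma re_dotc_ofReal_smul_self (hu : dotc u u = 1) (t : ℝ) :
    (dotc ((t : ℂ) • u) ((t : ℂ) • u)).re = t ^ 2 := by
  rw [dotc_smul_left, dotc_smul_right, hu, Complex.conj_ofReal, mul_one, ← Complex.ofReal_mul,
    Complex.ofReal_re, sq]

lemma normalized_apply_of_eq_smul (hu : dotc u u = 1) (ht : 0 < t) (hχ : χ θ = (t : ℂ) • u) :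
    normalized χ θ = u := by
  rw [normalized, hχ, re_dotc_ofReal_smul_self hu, Real.sqrt_sq ht.le, ← Complex.coe_smul,
    smul_smul, ← Complex.ofReal_mul, inv_mul_cancel₀ ht.ne', Complex.ofReal_one, one_smul]

lemma pder_normalized_of_eq_smul (hχd : DifferentiableAt ℝ χ θ) (hu : dotc u u = 1) (ht : 0 < t)
    (hχ : χ θ = (t : ℂ) • u) (k : Fin M) :
    ∃ a : ℂ, pder k (normalized χ) θ = ((t⁻¹ : ℝ) : ℂ) • pder k χ θ + a • u := by
  have hnormSq : (dotc (χ θ) (χ θ)).re = t ^ 2 := by rw [hχ, re_dotc_ofReal_smul_self hu]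
  have hnorm : √(dotc (χ θ) (χ θ)).re = t := by rw [hnormSq, Real.sqrt_sq ht.le]
  have hnormSq_diff : DifferentiableAt ℝ (fun θ => (dotc (χ θ) (χ θ)).re) θ :=
    Complex.reCLM.differentiableAt.comp θ (hχd.dotc hχd)
  have hdiff : DifferentiableAt ℝ (fun θ => (√(dotc (χ θ) (χ θ)).re)⁻¹) θ :=
    (hnormSq_diff.sqrt (by rw [hnormSq]; positivity)).inv (by rw [hnorm]; exact ht.ne')
  rw [show normalized χ = fun θ => (√(dotc (χ θ) (χ θ)).re)⁻¹ • χ θ from rfl,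
    pder_smul hdiff hχd, hnorm, hχ, Complex.coe_smul]
  exact ⟨fderiv ℝ (fun θ => (√(dotc (χ θ) (χ θ)).re)⁻¹) θ (Pi.single k 1) * t, by module⟩

end Normalization

theorem distilled_uhlmann_curvature_amplification_general
    (M D : ℕ) (ψ : (Fin M → ℝ) → (Fin D → ℂ))
    (hψ : Differentiable ℝ ψ)
    (hunit : ∀ θ, dotc (ψ θ) (ψ θ) = 1)
    (θstar : Fin M → ℝ) (t : ℝ) (ht0 : 0 < t)
    (P : Matrix (Fin D) (Fin D) ℂ)
    (hP : P = vecMulVec (ψ θstar) (star (ψ θstar)))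
    (K : Matrix (Fin D) (Fin D) ℂ)
    (hK : K = ((t : ℂ) - 1) • P + 1)
    (F : Matrix (Fin D) (Fin D) ℂ) (hF : F = Kᴴ * K)
    (p : (Fin M → ℝ) → ℝ)
    (hp : ∀ θ, p θ = (dotc (ψ θ) (F.mulVec (ψ θ))).re)
    (ψps : (Fin M → ℝ) → (Fin D → ℂ))
    (hψps : ∀ θ', ψps θ' = (Real.sqrt (p θ'))⁻¹ • K.mulVec (ψ θ')) :
    ∀ i j, uhlmann ψps θstar i j = (1 / t ^ 2) * uhlmann ψ θstar i j := by
  have hu : dotc (ψ θstar) (ψ θstar) = 1 := hunit θstar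
  have hKu : K *ᵥ ψ θstar = (t : ℂ) • ψ θstar := by
    rw [hK, hP, rankOneUpdate_mulVec_self hu, sub_add_cancel]
  have hψps_eq : ψps = normalized (fun θ => K *ᵥ ψ θ) := by
    funext θ
    rw [hψps, hp, hF, dotc_conjTranspose_mul_mulVec, normalized]
  have hpder : ∀ k, ∃ a : ℂ,
      pder k ψps θstar = ((t⁻¹ : ℝ) : ℂ) • pder k ψ θstar + a • ψ θstar := by
    intro k
    obtain ⟨a, ha⟩ := pder_normalized_of_eq_smul ((hψ θstar).mulVec K) hu ht0 hKu k
    rw [hψps_eq, ha, pder_mulVec K (hψ θstar), hK, hP, rankOneUpdate_mulVec, smul_add, smul_smul,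
      add_assoc, ← add_smul]
    exact ⟨_, rfl⟩
  intro i j
  rw [one_div, ← inv_pow]
  exact uhlmann_eq_of_pder_eq_smul_add hu
    (hψps_eq ▸ normalized_apply_of_eq_smul hu ht0 hKu) t⁻¹ hpder i j

/-- The Uhlmann curvature transforms under postselection with
`K = (t−1)|ψ(θ*)⟩⟨ψ(θ*)| + I` exactly like the QFIM:
`𝓙_{ij}(θ*|ψ^{ps}) = (1/t²) 𝓙_{ij}(θ*|ψ)`. -/
theorem distilled_uhlmann_curvature_amplification
    (M D : ℕ) (ψ : (Fin M → ℝ) → (Fin D → ℂ))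
    (hψ : Differentiable ℝ ψ)
    (hunit : ∀ θ, dotc (ψ θ) (ψ θ) = 1)
    (θstar : Fin M → ℝ) (t : ℝ) (ht0 : 0 < t) (ht1 : t ≤ 1)
    (P : Matrix (Fin D) (Fin D) ℂ)
    (hP : P = vecMulVec (ψ θstar) (star (ψ θstar)))
    (K : Matrix (Fin D) (Fin D) ℂ)
    (hK : K = ((t : ℂ) - 1) • P + 1)
    (F : Matrix (Fin D) (Fin D) ℂ) (hF : F = Kᴴ * K)
    (p : (Fin M → ℝ) → ℝ)
    (hp : ∀ θ, p θ = (dotc (ψ θ) (F.mulVec (ψ θ))).re)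
    (ψps : (Fin M → ℝ) → (Fin D → ℂ))
    (hψps : ∀ θ', ψps θ' = (Real.sqrt (p θ'))⁻¹ • K.mulVec (ψ θ')) :
    ∀ i j, uhlmann ψps θstar i j = (1 / t ^ 2) * uhlmann ψ θstar i j :=
  distilled_uhlmann_curvature_amplification_general M D ψ hψ hunit θstar t ht0 P hP K hK F hF p hp
    ψps hψps
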